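/- arXiv:2503.16259 — 2 statements merged into one kernel-verified Lean document; each statement's English description precedes it below -/
import Mathlib

section
/- Let L have weights (2,2,p,q) with p,q ≥ 2, s := x_1+x_2+x_3+x_4 and δ := (p−2)x_3 + (q−2)x_4. Then the interval [s, s+δ] = { Σ ℓ_i x_i : ℓ_1 = ℓ_2 = 1, 1 ≤ ℓ_3 ≤ p−1, 1 ≤ ℓ_4 ≤ q−1 } has exactly (p−1)(q−1) elements. -/
/-- The subgroup of relations `p i • x_i - c` in the free abelian group on `x_1,…,x_n,c`. -/
def Lrel (n : ℕ) (p : Fin n → ℤ) : AddSubgroup ((Fin n → ℤ) × ℤ) :=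
  AddSubgroup.closure {v | ∃ i : Fin n, v = (Pi.single i (p i), -1)}

/-- The Geigle-Lenzing group `L = ⟨x_1,…,x_n,c⟩ / ⟨p_i x_i - c⟩`. -/
abbrev Lgrp (n : ℕ) (p : Fin n → ℤ) : Type :=
  ((Fin n → ℤ) × ℤ) ⧸ Lrel n p

/-- The generator `x_i` of `L`. -/
def Lx (n : ℕ) (p : Fin n → ℤ) (i : Fin n) : Lgrp n p :=
  QuotientAddGroup.mk (Pi.single i 1, 0)

/-- The canonical element `c` of `L`. -/
def Lc (n : ℕ) (p : Fin n → ℤ) : Lgrp n p :=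
  QuotientAddGroup.mk (0, 1)

/-- The positive cone `L_+`, the submonoid generated by `x_1,…,x_n,c`. -/
def Lplus (n : ℕ) (p : Fin n → ℤ) : AddSubmonoid (Lgrp n p) :=
  AddSubmonoid.closure (Set.range (Lx n p) ∪ {Lc n p})

section Homs

variable {n : ℕ} {p : Fin n → ℤ} {A : Type*} [AddCommGroup A]

/-- The ambient evaluation hom. -/
def ambient (w : Fin n → A) (wc : A) : ((Fin n → ℤ) × ℤ) →+ A where
  toFun v := (∑ i, v.1 i • w i) + v.2 • wc
  map_zero' := by simp
  map_add' a b := by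
    simp only [Prod.fst_add, Pi.add_apply, add_smul, Prod.snd_add,
      Finset.sum_add_distrib]
    abel

lemma ambient_apply (w : Fin n → A) (wc : A) (v : (Fin n → ℤ) × ℤ) :
    ambient w wc v = (∑ i, v.1 i • w i) + v.2 • wc := rfl

/-- The descended hom on `L`. -/
def Lhom (w : Fin n → A) (wc : A) (hw : ∀ i, p i • w i = wc) : Lgrp n p →+ A :=
  QuotientAddGroup.lift _ (ambient w wc) (by
    intro v hv
    refine AddSubgroup.closure_induction ?_ (map_zero _) ?_ ?_ hv
    · rintro v ⟨i, rfl⟩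
      simp only [AddMonoidHom.mem_ker, ambient_apply, neg_smul, one_smul]
      rw [Finset.sum_eq_single i]
      · rw [Pi.single_eq_same, hw i]; abel
      · intro j _ hj; rw [Pi.single_eq_of_ne hj, zero_smul]
      · simp
    · intro a b _ _ ha hb
      simp only [AddMonoidHom.mem_ker] at *
      rw [map_add, ha, hb, add_zero]
    · intro a _ ha
      simp only [AddMonoidHom.mem_ker] at *
      rw [map_neg, ha, neg_zero])

lemma Lhom_mk (w : Fin n → A) (wc : A) (hw : ∀ i, p i • w i = wc)
    (v : (Fin n → ℤ) × ℤ) :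
    Lhom w wc hw (QuotientAddGroup.mk v) = (∑ i, v.1 i • w i) + v.2 • wc := rfl

end Homs

section Specific

variable (p q : ℤ)

/-- degree hom -/
noncomputable def dh : Lgrp 4 ![2,2,p,q] →+ ℤ :=
  Lhom ![p*q, p*q, 2*q, 2*p] (2*(p*q)) (by
    intro i
    fin_cases i <;> simp [Matrix.cons_val_zero, Matrix.cons_val_one, smul_eq_mul] <;> ring)

/-- mod-2 hom detecting x_1 -/
noncomputable def ph1 : Lgrp 4 ![2,2,p,q] →+ ZMod 2 :=
  Lhom ![1,0,0,0] 0 (by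
    intro i
    fin_cases i <;> simp [zsmul_one, smul_zero]
    decide)

noncomputable def ph2 : Lgrp 4 ![2,2,p,q] →+ ZMod 2 :=
  Lhom ![0,1,0,0] 0 (by
    intro i
    fin_cases i <;> simp [zsmul_one, smul_zero]
    decide)

noncomputable def ph3 (hp : 0 ≤ p) : Lgrp 4 ![2,2,p,q] →+ ZMod p.toNat :=
  Lhom ![0,0,1,0] 0 (by
    intro i
    fin_cases i <;> simp [zsmul_one, smul_zero]
    rw [ZMod.intCast_zmod_eq_zero_iff_dvd, Int.toNat_of_nonneg hp])

noncomputable def ph4 (hq : 0 ≤ q) : Lgrp 4 ![2,2,p,q] →+ ZMod q.toNat :=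
  Lhom ![0,0,0,1] 0 (by
    intro i
    fin_cases i <;> simp [zsmul_one, smul_zero]
    rw [ZMod.intCast_zmod_eq_zero_iff_dvd, Int.toNat_of_nonneg hq])

end Specific

section Eval

variable (p q : ℤ)

lemma dh_mk (v : (Fin 4 → ℤ) × ℤ) :
    dh p q (QuotientAddGroup.mk v) =
      v.1 0 * (p*q) + v.1 1 * (p*q) + v.1 2 * (2*q) + v.1 3 * (2*p) + v.2 * (2*(p*q)) := by
  show (∑ i, v.1 i • (![p*q, p*q, 2*q, 2*p] : Fin 4 → ℤ) i) + v.2 • (2*(p*q)) = _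
  simp [Fin.sum_univ_four, smul_eq_mul]

lemma ph1_mk (v : (Fin 4 → ℤ) × ℤ) :
    ph1 p q (QuotientAddGroup.mk v) = (v.1 0 : ZMod 2) := by
  show (∑ i, v.1 i • (![1,0,0,0] : Fin 4 → ZMod 2) i) + v.2 • (0 : ZMod 2) = _
  simp [Fin.sum_univ_four, zsmul_one]

lemma ph2_mk (v : (Fin 4 → ℤ) × ℤ) :
    ph2 p q (QuotientAddGroup.mk v) = (v.1 1 : ZMod 2) := by
  show (∑ i, v.1 i • (![0,1,0,0] : Fin 4 → ZMod 2) i) + v.2 • (0 : ZMod 2) = _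
  simp [Fin.sum_univ_four, zsmul_one]

lemma ph3_mk (hp : 0 ≤ p) (v : (Fin 4 → ℤ) × ℤ) :
    ph3 p q hp (QuotientAddGroup.mk v) = (v.1 2 : ZMod p.toNat) := by
  show (∑ i, v.1 i • (![0,0,1,0] : Fin 4 → ZMod p.toNat) i) + v.2 • (0 : ZMod p.toNat) = _
  simp [Fin.sum_univ_four, zsmul_one]

lemma ph4_mk (hq : 0 ≤ q) (v : (Fin 4 → ℤ) × ℤ) :
    ph4 p q hq (QuotientAddGroup.mk v) = (v.1 3 : ZMod q.toNat) := by
  show (∑ i, v.1 i • (![0,0,0,1] : Fin 4 → ZMod q.toNat) i) + v.2 • (0 : ZMod q.toNat) = _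
  simp [Fin.sum_univ_four, zsmul_one]

end Eval

section Struct

variable {n : ℕ} {p : Fin n → ℤ}

lemma mk_eq_sum (v : (Fin n → ℤ) × ℤ) :
    (QuotientAddGroup.mk v : Lgrp n p) = (∑ i, v.1 i • Lx n p i) + v.2 • Lc n p := by
  have : v = (∑ i, v.1 i • ((Pi.single i 1 : Fin n → ℤ), (0:ℤ))) + v.2 • ((0 : Fin n → ℤ), (1:ℤ)) := by
    refine Prod.ext ?_ ?_
    · simp only [Prod.fst_add, Prod.fst_sum, Prod.smul_fst, Prod.smul_snd, smul_eq_mul]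
      funext j
      simp [Finset.sum_apply, Pi.single_apply, Finset.sum_ite_eq', mul_ite]
    · simp [Prod.snd_sum]
  have h2 : (∑ i, v.1 i • Lx n p i) + v.2 • Lc n p
      = QuotientAddGroup.mk' (Lrel n p)
          ((∑ i, v.1 i • ((Pi.single i 1 : Fin n → ℤ), (0:ℤ))) +
            v.2 • ((0 : Fin n → ℤ), (1:ℤ))) := by
    rw [map_add, map_sum, map_zsmul]
    simp only [map_zsmul]
    rfl
  rw [h2, ← this]
  rfl

lemma mem_Lplus (a : Lgrp n p) (ha : a ∈ Lplus n p) :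
    ∃ v : (Fin n → ℤ) × ℤ, (∀ i, 0 ≤ v.1 i) ∧ 0 ≤ v.2 ∧ a = QuotientAddGroup.mk v := by
  refine AddSubmonoid.closure_induction
    (motive := fun x _ => ∃ v : (Fin n → ℤ) × ℤ,
      (∀ i, 0 ≤ v.1 i) ∧ 0 ≤ v.2 ∧ x = QuotientAddGroup.mk v) ?_ ?_ ?_ ha
  · rintro x (⟨i, rfl⟩ | rfl)
    · refine ⟨(Pi.single i 1, 0), fun j => ?_, le_refl 0, rfl⟩
      by_cases h : j = i <;> simp [Pi.single_apply, h]
    · exact ⟨(0, 1), fun j => le_refl 0, zero_le_one, rfl⟩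
  · exact ⟨(0, 0), fun j => le_refl 0, le_refl 0, rfl⟩
  · rintro a b _ _ ⟨va, hva1, hva2, rfl⟩ ⟨vb, hvb1, hvb2, rfl⟩
    exact ⟨va + vb, fun j => add_nonneg (hva1 j) (hvb1 j), add_nonneg hva2 hvb2, rfl⟩

lemma smul_mem_Lplus (i : Fin n) (k : ℤ) (hk : 0 ≤ k) : k • Lx n p i ∈ Lplus n p := by
  have : k • Lx n p i = k.toNat • Lx n p i := by
    rw [← natCast_zsmul, Int.toNat_of_nonneg hk]
  rw [this]
  exact AddSubmonoid.nsmul_mem _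
    (AddSubmonoid.subset_closure (Set.mem_union_left _ (Set.mem_range_self i))) _

end Struct

section Helpers

lemma mk_mem_Lplus {n : ℕ} {p : Fin n → ℤ} (v : (Fin n → ℤ) × ℤ)
    (h1 : ∀ i, 0 ≤ v.1 i) (h2 : 0 ≤ v.2) :
    (QuotientAddGroup.mk v : Lgrp n p) ∈ Lplus n p := by
  rw [mk_eq_sum]
  refine AddSubmonoid.add_mem _ (AddSubmonoid.sum_mem _ fun i _ => smul_mem_Lplus i _ (h1 i)) ?_
  have hc : Lc n p ∈ Lplus n p :=
    AddSubmonoid.subset_closure (Set.mem_union_right _ rfl)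
  have : v.2 • Lc n p = v.2.toNat • Lc n p := by
    rw [← natCast_zsmul, Int.toNat_of_nonneg h2]
  rw [this]
  exact AddSubmonoid.nsmul_mem _ hc _

variable (p q : ℤ)

lemma hz_mk (l3 l4 : ℤ) :
    Lx 4 ![2,2,p,q] 0 + Lx 4 ![2,2,p,q] 1 + l3 • Lx 4 ![2,2,p,q] 2 + l4 • Lx 4 ![2,2,p,q] 3 =
      QuotientAddGroup.mk (![1,1,l3,l4], 0) := by
  rw [mk_eq_sum]
  simp [Fin.sum_univ_four]

lemma hs_mk : (∑ i, Lx 4 ![2,2,p,q] i) = QuotientAddGroup.mk ((1 : Fin 4 → ℤ), (0:ℤ)) := by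
  rw [mk_eq_sum]
  simp [Fin.sum_univ_four]

lemma hdelta_mk : (p - 2) • Lx 4 ![2,2,p,q] 2 + (q - 2) • Lx 4 ![2,2,p,q] 3 =
      QuotientAddGroup.mk (![0,0,p-2,q-2], (0:ℤ)) := by
  rw [mk_eq_sum]
  simp [Fin.sum_univ_four]

lemma zmod_dvd {m : ℤ} (hm : 0 ≤ m) {a b : ℤ} (h : (a : ZMod m.toNat) = (b : ZMod m.toNat)) :
    m ∣ a - b := by
  have h2 := Int.ModEq.dvd ((ZMod.intCast_eq_intCast_iff _ _ _).mp h)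
  rw [Int.toNat_of_nonneg hm] at h2
  exact dvd_sub_comm.mp h2

lemma cong_ge (m : ℤ) (hm : 2 ≤ m) (N : ℤ) (hN : 0 ≤ N) (hd : m ∣ N - (m - 2)) :
    ∃ t, 0 ≤ t ∧ N = (m - 2) + t * m := by
  obtain ⟨t, ht⟩ := hd
  refine ⟨t, ?_, by linarith⟩
  by_contra hcon
  push_neg at hcon
  nlinarith

end Helpers


/-- For weights `(2,2,p,q)`, with `s = Σ x_i` and `δ = (p−2)x_3 + (q−2)x_4`, the
interval `[s, s+δ]` consists exactly of the elements `Σ ℓ_i x_i` with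
`ℓ_1 = ℓ_2 = 1`, `1 ≤ ℓ_3 ≤ p−1`, `1 ≤ ℓ_4 ≤ q−1`, and has `(p−1)(q−1)` elements. -/
theorem interval_description (p q : ℤ) (hp : 2 ≤ p) (hq : 2 ≤ q) :
    {z : Lgrp 4 ![2,2,p,q] |
        z - (∑ i, Lx 4 ![2,2,p,q] i) ∈ Lplus 4 ![2,2,p,q] ∧
        ((∑ i, Lx 4 ![2,2,p,q] i) +
          ((p - 2) • Lx 4 ![2,2,p,q] 2 + (q - 2) • Lx 4 ![2,2,p,q] 3)) - z ∈
            Lplus 4 ![2,2,p,q]} =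
      {z : Lgrp 4 ![2,2,p,q] | ∃ l3 l4 : ℤ,
        1 ≤ l3 ∧ l3 ≤ p - 1 ∧ 1 ≤ l4 ∧ l4 ≤ q - 1 ∧
        z = Lx 4 ![2,2,p,q] 0 + Lx 4 ![2,2,p,q] 1 +
          l3 • Lx 4 ![2,2,p,q] 2 + l4 • Lx 4 ![2,2,p,q] 3} ∧
    {z : Lgrp 4 ![2,2,p,q] |
        z - (∑ i, Lx 4 ![2,2,p,q] i) ∈ Lplus 4 ![2,2,p,q] ∧
        ((∑ i, Lx 4 ![2,2,p,q] i) +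
          ((p - 2) • Lx 4 ![2,2,p,q] 2 + (q - 2) • Lx 4 ![2,2,p,q] 3)) - z ∈
            Lplus 4 ![2,2,p,q]}.ncard = ((p - 1) * (q - 1)).toNat := by
  classical
  have hp0 : (0:ℤ) ≤ p := by omega
  have hq0 : (0:ℤ) ≤ q := by omega
  have hset : {z : Lgrp 4 ![2,2,p,q] |
        z - (∑ i, Lx 4 ![2,2,p,q] i) ∈ Lplus 4 ![2,2,p,q] ∧
        ((∑ i, Lx 4 ![2,2,p,q] i) +
          ((p - 2) • Lx 4 ![2,2,p,q] 2 + (q - 2) • Lx 4 ![2,2,p,q] 3)) - z ∈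
            Lplus 4 ![2,2,p,q]} =
      {z : Lgrp 4 ![2,2,p,q] | ∃ l3 l4 : ℤ,
        1 ≤ l3 ∧ l3 ≤ p - 1 ∧ 1 ≤ l4 ∧ l4 ≤ q - 1 ∧
        z = Lx 4 ![2,2,p,q] 0 + Lx 4 ![2,2,p,q] 1 +
          l3 • Lx 4 ![2,2,p,q] 2 + l4 • Lx 4 ![2,2,p,q] 3} := by
    ext z
    simp only [Set.mem_setOf_eq]
    constructor
    · rintro ⟨h1, h2⟩
      obtain ⟨va, hva1, hva2, hz1⟩ := mem_Lplus _ h1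
      obtain ⟨vb, hvb1, hvb2, hz2⟩ := mem_Lplus _ h2
      have hsum : (QuotientAddGroup.mk va : Lgrp 4 ![2,2,p,q]) + QuotientAddGroup.mk vb
          = (QuotientAddGroup.mk (![0,0,p-2,q-2], (0:ℤ)) : Lgrp 4 ![2,2,p,q]) := by
        rw [← hdelta_mk, ← hz1, ← hz2]; abel
      -- degree equation
      have hd := congrArg (dh p q) hsum
      rw [map_add, dh_mk, dh_mk, dh_mk] at hd
      simp only [Matrix.cons_val_zero, Matrix.cons_val_one, Matrix.head_cons, Matrix.cons_val_two, Matrix.cons_val_three, Matrix.tail_cons] at hd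
      norm_num at hd
      -- parity equations
      have h1' := congrArg (ph1 p q) hsum
      rw [map_add, ph1_mk, ph1_mk, ph1_mk] at h1'
      simp only [Matrix.cons_val_zero] at h1'
      rw [← Int.cast_add] at h1'
      norm_num at h1'
      have hdvd1 : (2:ℤ) ∣ va.1 0 + vb.1 0 := by
        have hc : ((va.1 0 + vb.1 0 : ℤ) : ZMod 2) = 0 := by push_cast; exact h1'
        exact_mod_cast (ZMod.intCast_zmod_eq_zero_iff_dvd (va.1 0 + vb.1 0) 2).mp hc
      have h2' := congrArg (ph2 p q) hsum
      rw [map_add, ph2_mk, ph2_mk, ph2_mk] at h2'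
      simp only [Matrix.cons_val_one, Matrix.head_cons] at h2'
      rw [← Int.cast_add] at h2'
      norm_num at h2'
      have hdvd2 : (2:ℤ) ∣ va.1 1 + vb.1 1 := by
        have hc : ((va.1 1 + vb.1 1 : ℤ) : ZMod 2) = 0 := by push_cast; exact h2'
        exact_mod_cast (ZMod.intCast_zmod_eq_zero_iff_dvd (va.1 1 + vb.1 1) 2).mp hc
      have h3' := congrArg (ph3 p q hp0) hsum
      rw [map_add, ph3_mk, ph3_mk, ph3_mk] at h3'
      rw [← Int.cast_add] at h3'
      have hdvd3 : p ∣ (va.1 2 + vb.1 2) - (p - 2) := by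
        apply zmod_dvd hp0
        simpa using h3'
      have h4' := congrArg (ph4 p q hq0) hsum
      rw [map_add, ph4_mk, ph4_mk, ph4_mk] at h4'
      rw [← Int.cast_add] at h4'
      have hdvd4 : q ∣ (va.1 3 + vb.1 3) - (q - 2) := by
        apply zmod_dvd hq0
        simpa using h4'
      obtain ⟨u, hu⟩ := hdvd1
      obtain ⟨u2, hu2⟩ := hdvd2
      obtain ⟨t, ht0, ht⟩ := cong_ge p hp _ (by have := hva1 2; have := hvb1 2; omega)
        hdvd3
      obtain ⟨s4, hs0, hs⟩ := cong_ge q hq _ (by have := hva1 3; have := hvb1 3; omega)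
        hdvd4
      have hu0 : 0 ≤ u := by have := hva1 0; have := hvb1 0; omega
      have hu20 : 0 ≤ u2 := by have := hva1 1; have := hvb1 1; omega
      have hz0 : 2*(p*q)*(u + u2 + t + s4 + va.2 + vb.2) = 0 := by
        linear_combination hd - (p*q)*hu - (p*q)*hu2 - (2*q)*ht - (2*p)*hs
      have hpq : 0 < p*q := by positivity
      have hall : u = 0 ∧ u2 = 0 ∧ t = 0 ∧ s4 = 0 ∧ va.2 = 0 ∧ vb.2 = 0 := by
        have hsum0 : u + u2 + t + s4 + va.2 + vb.2 = 0 := by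
          rcases mul_eq_zero.mp hz0 with h | h
          · nlinarith
          · exact h
        omega
      obtain ⟨hu0', hu20', ht0', hs0', hma, hmb⟩ := hall
      have ha0 : va.1 0 = 0 := by have := hva1 0; have := hvb1 0; omega
      have ha1 : va.1 1 = 0 := by have := hva1 1; have := hvb1 1; omega
      have hab2 : va.1 2 + vb.1 2 = p - 2 := by rw [ht0'] at ht; linarith
      have hab3 : va.1 3 + vb.1 3 = q - 2 := by rw [hs0'] at hs; linarith
      refine ⟨va.1 2 + 1, va.1 3 + 1, by have := hva1 2; omega,
        by have := hvb1 2; omega, by have := hva1 3; omega, by have := hvb1 3; omega, ?_⟩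
      have hzeq : z = QuotientAddGroup.mk va + (∑ i, Lx 4 ![2,2,p,q] i) := by
        rw [← hz1]; abel
      rw [hzeq, hs_mk, hz_mk]
      show QuotientAddGroup.mk' _ va + QuotientAddGroup.mk' _ _ = QuotientAddGroup.mk' _ _
      rw [← map_add]
      congr 1
      refine Prod.ext ?_ ?_
      · funext i
        fin_cases i <;>
          simp [ha0, ha1, Matrix.cons_val_zero, Matrix.cons_val_one, Matrix.head_cons] <;>
          ring
      · simpa using hma
    · rintro ⟨l3, l4, hb1, hb2, hb3, hb4, rfl⟩
      constructor
      · rw [hz_mk, hs_mk]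
        show QuotientAddGroup.mk' _ _ - QuotientAddGroup.mk' _ _ ∈ _
        rw [← map_sub]
        apply mk_mem_Lplus
        · intro i
          fin_cases i <;>
            simp [Pi.sub_apply, Pi.add_apply, Pi.one_apply, Matrix.vecHead, Matrix.vecTail] <;> omega
        · simp
      · rw [hz_mk, hs_mk, hdelta_mk]
        show QuotientAddGroup.mk' _ _ + QuotientAddGroup.mk' _ _ - QuotientAddGroup.mk' _ _ ∈ _
        rw [← map_add, ← map_sub]
        apply mk_mem_Lplus
        · intro i
          fin_cases i <;>
            simp [Pi.sub_apply, Pi.add_apply, Pi.one_apply, Matrix.vecHead, Matrix.vecTail] <;> omega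
        · simp
  refine ⟨hset, ?_⟩
  rw [hset]
  have himg : {z : Lgrp 4 ![2,2,p,q] | ∃ l3 l4 : ℤ,
        1 ≤ l3 ∧ l3 ≤ p - 1 ∧ 1 ≤ l4 ∧ l4 ≤ q - 1 ∧
        z = Lx 4 ![2,2,p,q] 0 + Lx 4 ![2,2,p,q] 1 +
          l3 • Lx 4 ![2,2,p,q] 2 + l4 • Lx 4 ![2,2,p,q] 3} =
      ↑((Finset.Icc 1 (p-1) ×ˢ Finset.Icc 1 (q-1)).image
        (fun l : ℤ × ℤ => (QuotientAddGroup.mk (![1,1,l.1,l.2], (0:ℤ)) : Lgrp 4 ![2,2,p,q]))) := by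
    ext z
    simp only [Set.mem_setOf_eq, Finset.coe_image, Set.mem_image, Finset.mem_coe,
      Finset.mem_product, Finset.mem_Icc]
    constructor
    · rintro ⟨l3, l4, hb1, hb2, hb3, hb4, rfl⟩
      exact ⟨(l3, l4), ⟨⟨hb1, hb2⟩, hb3, hb4⟩, (hz_mk p q l3 l4).symm⟩
    · rintro ⟨⟨l3, l4⟩, ⟨⟨hb1, hb2⟩, hb3, hb4⟩, rfl⟩
      exact ⟨l3, l4, hb1, hb2, hb3, hb4, (hz_mk p q l3 l4).symm⟩
  rw [himg, Set.ncard_coe_finset]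
  rw [Finset.card_image_of_injOn]
  · rw [Finset.card_product, Int.card_Icc, Int.card_Icc]
    have e1 : p - 1 + 1 - 1 = p - 1 := by ring
    have e2 : q - 1 + 1 - 1 = q - 1 := by ring
    rw [e1, e2]
    have h1 : (0:ℤ) ≤ p - 1 := by omega
    have h2 : (0:ℤ) ≤ q - 1 := by omega
    zify [Int.toNat_of_nonneg h1, Int.toNat_of_nonneg h2,
      Int.toNat_of_nonneg (mul_nonneg h1 h2)]
  · intro x hx y hy hxy
    simp only [Finset.coe_product, Set.mem_prod, Finset.mem_coe, Finset.mem_Icc] at hx hy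
    have e3 := congrArg (ph3 p q hp0) hxy
    rw [ph3_mk, ph3_mk] at e3
    simp only [Matrix.cons_val_two, Matrix.tail_cons, Matrix.head_cons] at e3
    have d3 := zmod_dvd hp0 e3
    have e4 := congrArg (ph4 p q hq0) hxy
    rw [ph4_mk, ph4_mk] at e4
    simp only [Matrix.cons_val_three, Matrix.tail_cons, Matrix.head_cons] at e4
    have d4 := zmod_dvd hq0 e4
    have hx1 : x.1 = y.1 := by
      have := Int.eq_zero_of_abs_lt_dvd d3 (by rw [abs_lt]; omega)
      omega
    have hx2 : x.2 = y.2 := by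
      have := Int.eq_zero_of_abs_lt_dvd d4 (by rw [abs_lt]; omega)
      omega
    exact Prod.ext hx1 hx2
end

section
/- Let L have weights (2,2,p,q) and let S ⊆ L consist of elements x = Σ λ_i x_i + λ c in normal form satisfying 0 < 2λ + #{1 ≤ i ≤ 4 : λ_i ≥ 1} ≤ #{3 ≤ i ≤ 4 : λ_i ∈ {0,1}}. Then every x ∈ S has λ ∈ {−1, 0, 1} in its normal form, and if λ = 1 then x = c, if λ = 0 then x > 0, and if λ = −1 then #{i : λ_i ≥ 1} > 2. -/
namespace GLpq

variable (p q : ℤ)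

/-- The weight sequence `(2,2,p,q)`. -/
def w : Fin 4 → ℤ := ![2, 2, p, q]

/-- The generator `x_i`. -/
def X (i : Fin 4) : Lgrp 4 (w p q) := Lx 4 (w p q) i

/-- The canonical element `c`. -/
def C : Lgrp 4 (w p q) := Lc 4 (w p q)

/-- The positive cone `L_+`. -/
def pos : AddSubmonoid (Lgrp 4 (w p q)) := Lplus 4 (w p q)

/-- The element `Σ l_i x_i`. -/
def elt (l : Fin 4 → ℤ) : Lgrp 4 (w p q) := ∑ t, l t • X p q t

/-- `s = x_1 + x_2 + x_3 + x_4`. -/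
def s : Lgrp 4 (w p q) := ∑ t, X p q t

/-- The dualizing element `ω = c − s`. -/
def om : Lgrp 4 (w p q) := C p q - s p q

/-- The partial order: `a ≤ b` iff `b − a ∈ L_+`. -/
def le (a b : Lgrp 4 (w p q)) : Prop := b - a ∈ pos p q

/-- The condition for `Σ l_i x_i` to lie in `[s, s+δ]`:
`l_1 = l_2 = 1`, `1 ≤ l_3 ≤ p−1`, `1 ≤ l_4 ≤ q−1`. -/
def inInterval (l : Fin 4 → ℤ) : Prop :=
  l 0 = 1 ∧ l 1 = 1 ∧ 1 ≤ l 2 ∧ l 2 ≤ p - 1 ∧ 1 ≤ l 3 ∧ l 3 ≤ q - 1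

end GLpq

section Aux

open AddSubgroup QuotientAddGroup

/-- The evaluation homomorphism on the free group. -/
private def evj (n : ℕ) (p : Fin n → ℤ) (j : Fin n) :
    ((Fin n → ℤ) × ℤ) →+ ℤ ⧸ zmultiples (p j) :=
  (QuotientAddGroup.mk' (zmultiples (p j))).comp
    ((Pi.evalAddMonoidHom (fun _ => ℤ) j).comp (AddMonoidHom.fst _ _))

private lemma Lrel_le_ker (n : ℕ) (p : Fin n → ℤ) (j : Fin n) :
    Lrel n p ≤ (evj n p j).ker := by
  rw [Lrel, AddSubgroup.closure_le]
  rintro v ⟨i, rfl⟩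
  have : ((Pi.single i (p i) : Fin n → ℤ) j) ∈ zmultiples (p j) := by
    rcases eq_or_ne i j with rfl | h
    · rw [Pi.single_eq_same]; exact mem_zmultiples (p i)
    · rw [Pi.single_eq_of_ne h.symm]; exact zero_mem _
  simpa [evj, AddMonoidHom.mem_ker, QuotientAddGroup.eq_zero_iff] using this

/-- The induced homomorphism on `L`. -/
private def phi (n : ℕ) (p : Fin n → ℤ) (j : Fin n) :
    Lgrp n p →+ ℤ ⧸ zmultiples (p j) :=
  QuotientAddGroup.lift (Lrel n p) (evj n p j) (fun _ hv => Lrel_le_ker n p j hv)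

private lemma phi_mk (n : ℕ) (p : Fin n → ℤ) (j : Fin n) (v : (Fin n → ℤ) × ℤ) :
    phi n p j (QuotientAddGroup.mk v) = QuotientAddGroup.mk (v.1 j) := by
  rfl

private lemma phi_X (p q : ℤ) (j i : Fin 4) :
    phi 4 (GLpq.w p q) j (GLpq.X p q i)
      = QuotientAddGroup.mk ((Pi.single i 1 : Fin 4 → ℤ) j) := by
  rfl

private lemma phi_elt (p q : ℤ) (j : Fin 4) (lam : Fin 4 → ℤ) :
    phi 4 (GLpq.w p q) j (GLpq.elt p q lam) = QuotientAddGroup.mk (lam j) := by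
  rw [GLpq.elt, map_sum]
  have : ∀ t, phi 4 (GLpq.w p q) j (lam t • GLpq.X p q t)
      = QuotientAddGroup.mk (lam t * (Pi.single t 1 : Fin 4 → ℤ) j) := by
    intro t
    rw [map_zsmul, phi_X]
    rfl
  rw [Finset.sum_congr rfl fun t _ => this t]
  rw [← QuotientAddGroup.mk_sum]
  congr 1
  rw [Finset.sum_eq_single j (fun t _ ht => by rw [Pi.single_eq_of_ne ht.symm, mul_zero]) (by simp)]
  simp

end Aux

open GLpq in
/-- Elements `x = Σ λ_i x_i + λ c` of the set `S` (in normal form, with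
`0 < 2λ + #{i : λ_i ≥ 1} ≤ #{3 ≤ i ≤ 4 : λ_i ∈ {0,1}}`) have `λ ∈ {−1,0,1}`;
if `λ = 1` then `x = c`; if `λ = 0` then `x > 0`; and if `λ = −1` then
`#{i : λ_i ≥ 1} > 2`. -/
theorem S_description (p q : ℤ) (hp : 2 ≤ p) (hq : 2 ≤ q)
    (lam : Fin 4 → ℤ) (l : ℤ)
    (hlam : ∀ i, 0 ≤ lam i ∧ lam i < w p q i)
    (hS : 0 < 2 * l + ((Finset.univ.filter fun i => 1 ≤ lam i).card : ℤ) ∧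
      2 * l + ((Finset.univ.filter fun i => 1 ≤ lam i).card : ℤ) ≤
        ((({2, 3} : Finset (Fin 4)).filter fun i => lam i = 0 ∨ lam i = 1).card : ℤ)) :
    (l = -1 ∨ l = 0 ∨ l = 1) ∧
    (l = 1 → elt p q lam + l • C p q = C p q) ∧
    (l = 0 → elt p q lam + l • C p q ∈ pos p q ∧ elt p q lam + l • C p q ≠ 0) ∧
    (l = -1 → 2 < (Finset.univ.filter fun i => 1 ≤ lam i).card) := by
  set A := Finset.univ.filter fun i => 1 ≤ lam i with hA
  set B := ({2, 3} : Finset (Fin 4)).filter fun i => lam i = 0 ∨ lam i = 1 with hB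
  have hAcard : A.card ≤ 4 := by
    calc A.card ≤ (Finset.univ : Finset (Fin 4)).card := Finset.card_filter_le _ _
    _ = 4 := by simp
  have hBcard : B.card ≤ 2 := by
    calc B.card ≤ ({2, 3} : Finset (Fin 4)).card := Finset.card_filter_le _ _
    _ ≤ 2 := by simp [Finset.card_insert_le]
  refine ⟨by omega, ?_, ?_, by omega⟩
  · -- l = 1
    intro hl
    subst hl
    have hA0 : A.card = 0 := by omega
    have hall : ∀ i, lam i = 0 := by
      intro i
      have := Finset.filter_eq_empty_iff.mp (Finset.card_eq_zero.mp hA0) (Finset.mem_univ i)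
      have := (hlam i).1
      omega
    have : elt p q lam = 0 := by
      rw [elt]
      exact Finset.sum_eq_zero fun t _ => by rw [hall t, zero_zsmul]
    rw [this, one_zsmul, zero_add]
  · -- l = 0
    intro hl
    subst hl
    constructor
    · rw [zero_zsmul, add_zero]
      refine AddSubmonoid.sum_mem _ fun t _ => ?_
      have hX : X p q t ∈ pos p q :=
        AddSubmonoid.subset_closure (Or.inl ⟨t, rfl⟩)
      have : lam t • X p q t = (lam t).toNat • X p q t := by
        rw [← natCast_zsmul, Int.toNat_of_nonneg (hlam t).1]
      rw [this]
      exact AddSubmonoid.nsmul_mem _ hX _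
    · rw [zero_zsmul, add_zero]
      have hApos : 0 < A.card := by omega
      obtain ⟨j, hj⟩ := Finset.card_pos.mp hApos
      have hj1 : 1 ≤ lam j := (Finset.mem_filter.mp hj).2
      intro h0
      have := phi_elt p q j lam
      rw [h0, map_zero] at this
      have hmem : (lam j : ℤ) ∈ AddSubgroup.zmultiples (w p q j) :=
        (QuotientAddGroup.eq_zero_iff _).mp this.symm
      obtain ⟨k, hk⟩ := AddSubgroup.mem_zmultiples_iff.mp hmem
      have hdvd : w p q j ∣ lam j := ⟨k, by rw [← hk, smul_eq_mul]; ring⟩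
      have hwj : 2 ≤ w p q j := by
        fin_cases j <;> simp [w] <;> omega
      have := Int.le_of_dvd (by omega) hdvd
      have := (hlam j).2
      omega
end
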